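/- arXiv:2502.08853 — 3 statements merged into one kernel-verified Lean document; each statement's English description precedes it below -/
import Mathlib

section
/- For integers k, m with 1 ≤ k ≤ 2^m, setting n = ⌈π/(4 arcsin√(k/2^m)) - 1/2⌉ and φ = 2 arcsin( sin(π/(4n+2)) / √(k/2^m) ), the phase φ is well-defined (the arcsin argument lies in [0,1]). -/
/-- Well-definedness of Long's phase: for 1 ≤ k ≤ 2^m, with
n = ⌈π/(4 arcsin √(k/2^m)) - 1/2⌉, the arcsin argument
sin(π/(4n+2)) / √(k/2^m) lies in [0,1]. -/
theorem long_phase_well_defined (k m : ℕ) (hk : 1 ≤ k) (hkm : k ≤ 2 ^ m) :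
    let n : ℕ := ⌈Real.pi / (4 * Real.arcsin (Real.sqrt ((k : ℝ) / 2 ^ m))) - 1 / 2⌉₊
    0 ≤ Real.sin (Real.pi / (4 * (n : ℝ) + 2)) ∧
      Real.sin (Real.pi / (4 * (n : ℝ) + 2)) ≤ Real.sqrt ((k : ℝ) / 2 ^ m) := by
  intro n
  set s : ℝ := Real.sqrt ((k : ℝ) / 2 ^ m) with hs
  have hratio_pos : (0 : ℝ) < (k : ℝ) / 2 ^ m := by
    apply div_pos (by exact_mod_cast hk) (by positivity)
  have hratio_le : (k : ℝ) / 2 ^ m ≤ 1 := by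
    rw [div_le_one (by positivity)]
    exact_mod_cast hkm
  have hs_pos : 0 < s := Real.sqrt_pos.mpr hratio_pos
  have hs_le : s ≤ 1 := by
    rw [hs, show (1:ℝ) = Real.sqrt 1 by simp]
    exact Real.sqrt_le_sqrt hratio_le
  set θ : ℝ := Real.arcsin s with hθ
  have hθ_pos : 0 < θ := Real.arcsin_pos.mpr hs_pos
  have hθ_le : θ ≤ Real.pi / 2 := Real.arcsin_le_pi_div_two s
  have hden_pos : (0 : ℝ) < 4 * (n : ℝ) + 2 := by positivity
  have hn : Real.pi / (4 * θ) - 1 / 2 ≤ (n : ℝ) := Nat.le_ceil _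
  have hkey : Real.pi / (4 * (n : ℝ) + 2) ≤ θ := by
    rw [div_le_iff₀ hden_pos]
    have : Real.pi / (4 * θ) ≤ (n : ℝ) + 1 / 2 := by linarith
    have h4θ : (0:ℝ) < 4 * θ := by linarith
    rw [div_le_iff₀ h4θ] at this
    nlinarith
  have harg_nonneg : 0 ≤ Real.pi / (4 * (n : ℝ) + 2) :=
    le_of_lt (div_pos Real.pi_pos hden_pos)
  have harg_le : Real.pi / (4 * (n : ℝ) + 2) ≤ Real.pi :=
    div_le_self Real.pi_pos.le (by linarith)
  constructor
  · exact Real.sin_nonneg_of_nonneg_of_le_pi harg_nonneg harg_le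
  · have : Real.sin (Real.pi / (4 * (n : ℝ) + 2)) ≤ Real.sin θ := by
      apply Real.strictMonoOn_sin.monotoneOn
      · constructor <;> [linarith; exact le_trans hkey hθ_le]
      · constructor <;> [linarith; exact hθ_le]
      · exact hkey
    rwa [hθ, Real.sin_arcsin (by linarith) hs_le] at this
end

section
/- Long's modified Grover iteration with equal phases φ achieves exact amplitude amplification: with n = ⌈π/(4β) - 1/2⌉ where β = arcsin√(k/2^m), and φ = 2 arcsin(sin(π/(4n+2))/sin β), the final state after n iterations has all amplitude (up to global phase) on the marked subspace. -/
/-! With `e = exp (φ i)` and `sin (φ / 2) sin β = sin θ`, the iteration matrix `Q` has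
`det Q = e²` and `tr Q = 2 e cos 2θ`, so by Cayley–Hamilton the amplitude `a_j` of `Q^j ψ` on
the unmarked state satisfies `a_{j+2} = 2 e cos 2θ a_{j+1} - e² a_j`. This recurrence is solved
by `a_j = e^j cos ((2j+1)θ) cos β / cos θ`. Long's choice `θ = π / (4n+2)` is at most `β` (so
that `φ` exists) and makes `(2n+1)θ = π/2`, hence `a_n = 0`. -/

open Matrix

theorem Matrix.mul_self_fin_two {R : Type*} [CommRing R] (A : Matrix (Fin 2) (Fin 2) R) :
    A * A = A.trace • A - A.det • 1 := by
  ext i j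
  fin_cases i <;> fin_cases j <;> simp [Matrix.mul_apply, det_fin_two, trace_fin_two] <;> ring

theorem Matrix.pow_add_two_mulVec_fin_two {R : Type*} [CommRing R]
    (A : Matrix (Fin 2) (Fin 2) R) (v : Fin 2 → R) (i : ℕ) :
    A ^ (i + 2) *ᵥ v = A.trace • (A ^ (i + 1) *ᵥ v) - A.det • (A ^ i *ᵥ v) := by
  rw [pow_add, sq, mul_self_fin_two, mul_sub, Matrix.mul_smul, Matrix.mul_smul, ← pow_succ,
    mul_one, sub_mulVec, smul_mulVec, smul_mulVec]

theorem eq_of_two_step_recurrence {R : Type*} [Ring R] {a b : R} {u v : ℕ → R}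
    (hu : ∀ i, u (i + 2) = a * u (i + 1) - b * u i)
    (hv : ∀ i, v (i + 2) = a * v (i + 1) - b * v i) (h₀ : u 0 = v 0) (h₁ : u 1 = v 1) :
    u = v := by
  funext i
  induction i using Nat.twoStepInduction with
  | zero => exact h₀
  | one => exact h₁
  | more i ih₀ ih₁ => rw [hu, hv, ih₀, ih₁]

theorem Complex.exp_mul_I_sub_one_sq (x : ℂ) :
    (exp (x * I) - 1) ^ 2 = -4 * exp (x * I) * sin (x / 2) ^ 2 := by
  have hx : exp (x * I) = exp (x / 2 * I) ^ 2 := by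
    rw [← exp_nat_mul]; ring_nf
  have hw : exp (x / 2 * I) ^ 2 - 1 = 2 * sin (x / 2) * I * exp (x / 2 * I) := by
    rw [exp_mul_I]
    linear_combination -sin (x / 2) ^ 2 * I_sq + sin_sq_add_cos_sq (x / 2)
  rw [hx, hw]
  linear_combination 4 * sin (x / 2) ^ 2 * exp (x / 2 * I) ^ 2 * I_sq

section LongIterate

variable {R : Type*} [CommRing R]

def longIterate (e : R) (ψ : Fin 2 → R) : Matrix (Fin 2) (Fin 2) R :=
  (1 + (e - 1) • vecMulVec ψ ψ) * diagonal ![e, 1]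

theorem longIterate_eq (e s c : R) :
    longIterate e ![s, c] =
      !![e * (1 + (e - 1) * s ^ 2), (e - 1) * s * c;
        e * ((e - 1) * s * c), 1 + (e - 1) * c ^ 2] := by
  ext i j
  fin_cases i <;> fin_cases j <;> simp [longIterate, vecMulVec] <;> ring

variable {e s c : R}

theorem det_longIterate (hsc : s ^ 2 + c ^ 2 = 1) : (longIterate e ![s, c]).det = e ^ 2 := by
  rw [longIterate_eq, det_fin_two_of]
  linear_combination e * (e - 1) * hsc

theorem trace_longIterate (hsc : s ^ 2 + c ^ 2 = 1) :
    (longIterate e ![s, c]).trace = 2 * e + (e - 1) ^ 2 * s ^ 2 := by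
  rw [longIterate_eq, trace_fin_two_of]
  linear_combination (e - 1) * hsc

theorem longIterate_mulVec_one (hsc : s ^ 2 + c ^ 2 = 1) :
    (longIterate e ![s, c] *ᵥ ![s, c]) 1 = (e + (e - 1) ^ 2 * s ^ 2) * c := by
  rw [longIterate_eq, mulVec_fin_two]
  simp only [of_apply, cons_val_one, cons_val_zero, cons_val_fin_one]
  linear_combination (e - 1) * c * hsc

end LongIterate

theorem cos_mul_longIterate_pow_mulVec_one {φ θ s c : ℝ} (hsc : s ^ 2 + c ^ 2 = 1)
    (hθ : Real.sin (φ / 2) * s = Real.sin θ) (j : ℕ) :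
    (Real.cos θ : ℂ) *
        (longIterate (Complex.exp (φ * Complex.I)) ![(s : ℂ), c] ^ j *ᵥ ![(s : ℂ), c]) 1 =
      Complex.exp (φ * Complex.I) ^ j * (Real.cos ((2 * j + 1) * θ) * c : ℝ) := by
  set e := Complex.exp (φ * Complex.I)
  set Q := longIterate e ![(s : ℂ), c]
  have hscℂ : (s : ℂ) ^ 2 + (c : ℂ) ^ 2 = 1 := by exact_mod_cast hsc
  have hκ : (e - 1) ^ 2 * (s : ℂ) ^ 2 = e * (2 * (Real.cos (2 * θ) : ℂ) - 2) := by
    have hsin : (Real.sin (φ / 2) : ℂ) * s = Real.sin θ := by exact_mod_cast hθ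
    have hcos : Real.cos (2 * θ) = 1 - 2 * Real.sin θ ^ 2 := by
      rw [Real.cos_two_mul, Real.cos_sq']; ring
    rw [Complex.exp_mul_I_sub_one_sq, hcos]
    push_cast at hsin ⊢
    linear_combination -4 * e * (Complex.sin (φ / 2) * s + Complex.sin θ) * hsin
  have htr : Q.trace = e * (2 * Real.cos (2 * θ)) := by
    rw [trace_longIterate hscℂ]; linear_combination hκ
  refine congrFun (eq_of_two_step_recurrence (a := Q.trace) (b := Q.det)
    (u := fun j ↦ (Real.cos θ : ℂ) * (Q ^ j *ᵥ ![(s : ℂ), c]) 1)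
    (v := fun j ↦ e ^ j * (Real.cos ((2 * j + 1) * θ) * c : ℝ)) ?_ ?_ ?_ ?_) j
  · intro i
    simp only [Matrix.pow_add_two_mulVec_fin_two, Pi.sub_apply, Pi.smul_apply, smul_eq_mul]
    ring
  · intro i
    have hrec : Real.cos ((2 * (i + 2) + 1) * θ) + Real.cos ((2 * i + 1) * θ) =
        2 * Real.cos (2 * θ) * Real.cos ((2 * (i + 1) + 1) * θ) := by
      rw [Real.cos_add_cos]; ring_nf
    have hrecℂ := congrArg ((↑) : ℝ → ℂ) hrec
    rw [htr, det_longIterate hscℂ]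
    push_cast at hrecℂ ⊢
    linear_combination e ^ (i + 2) * c * hrecℂ
  · simp
  · have hcos :
        Real.cos ((2 * (1 : ℕ) + 1) * θ) = Real.cos θ * (2 * Real.cos (2 * θ) - 1) := by
      rw [Nat.cast_one, show (2 * 1 + 1) * θ = 3 * θ by ring, Real.cos_three_mul,
        Real.cos_two_mul]
      ring
    simp only [pow_one]
    rw [longIterate_mulVec_one hscℂ, hκ, hcos]
    push_cast
    ring

theorem pi_div_two_le_two_mul_ceil_add_one_mul {β : ℝ} (hβ : 0 < β) :
    Real.pi / 2 ≤ (2 * ⌈Real.pi / (4 * β) - 1 / 2⌉₊ + 1) * β := by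
  have hceil := Nat.le_ceil (Real.pi / (4 * β) - 1 / 2)
  rw [sub_le_iff_le_add, div_le_iff₀ (by positivity)] at hceil
  linarith
theorem sin_arcsin_sin_div_sin_mul_sin {θ β : ℝ} (hθ : 0 ≤ θ) (hθβ : θ ≤ β)
    (hβ : 0 < β) (hβle : β ≤ Real.pi / 2) :
    Real.sin (Real.arcsin (Real.sin θ / Real.sin β)) * Real.sin β = Real.sin θ := by
  have hsinβ : 0 < Real.sin β := Real.sin_pos_of_pos_of_lt_pi hβ (by linarith [Real.pi_pos])
  have hsinθ : 0 ≤ Real.sin θ := Real.sin_nonneg_of_nonneg_of_le_pi hθ (by linarith)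
  have hle : Real.sin θ ≤ Real.sin β :=
    Real.sin_le_sin_of_le_of_le_pi_div_two (by linarith [Real.pi_pos]) hβle hθβ
  rw [Real.sin_arcsin (by linarith [div_nonneg hsinθ hsinβ.le]) ((div_le_one hsinβ).2 hle),
    div_mul_cancel₀ _ hsinβ.ne']

theorem long_exact_amplitude_amplification_general (k m : ℕ) (hk : 1 ≤ k) :
    let β : ℝ := Real.arcsin (Real.sqrt ((k : ℝ) / 2 ^ m))
    let n : ℕ := ⌈Real.pi / (4 * β) - 1 / 2⌉₊
    let φ : ℝ := 2 * Real.arcsin (Real.sin (Real.pi / (4 * (n : ℝ) + 2)) / Real.sin β)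
    let ψ : Fin 2 → ℂ := ![(Real.sin β : ℂ), (Real.cos β : ℂ)]
    let Sχ : Matrix (Fin 2) (Fin 2) ℂ :=
      Matrix.diagonal ![Complex.exp ((φ : ℂ) * Complex.I), 1]
    let Q : Matrix (Fin 2) (Fin 2) ℂ :=
      (1 + (Complex.exp ((φ : ℂ) * Complex.I) - 1) • Matrix.vecMulVec ψ ψ) * Sχ
    ((Q ^ n).mulVec ψ) 1 = 0 := by
  intro β n φ ψ Sχ Q
  have hβ : 0 < β := Real.arcsin_pos.2 (Real.sqrt_pos.2 (by positivity))
  have hβle : β ≤ Real.pi / 2 := Real.arcsin_le_pi_div_two _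
  have hnβ : Real.pi / 2 ≤ (2 * n + 1) * β := pi_div_two_le_two_mul_ceil_add_one_mul hβ
  rcases Nat.eq_zero_or_pos n with hn | hn
  · have hcos : Real.cos β = 0 := by
      rw [le_antisymm hβle (by simpa [hn] using hnβ), Real.cos_pi_div_two]
    simp [hn, ψ, hcos]
  set θ := Real.pi / (4 * (n : ℝ) + 2)
  have hθ : (2 * n + 1) * θ = Real.pi / 2 := by simp only [θ]; field_simp; ring
  have hθ0 : 0 < θ := by positivity
  have hθβ : θ ≤ β := by nlinarith
  have hθcos : Real.cos θ ≠ 0 := by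
    have : (1 : ℝ) ≤ n := by exact_mod_cast hn
    exact (Real.cos_pos_of_mem_Ioo ⟨by linarith, by nlinarith⟩).ne'
  have hsin : Real.sin (φ / 2) * Real.sin β = Real.sin θ := by
    rw [mul_div_cancel_left₀ _ two_ne_zero]
    exact sin_arcsin_sin_div_sin_mul_sin hθ0.le hθβ hβ hβle
  have hclosed := cos_mul_longIterate_pow_mulVec_one (Real.sin_sq_add_cos_sq β) hsin n
  rw [hθ, Real.cos_pi_div_two, zero_mul, Complex.ofReal_zero, mul_zero] at hclosed
  exact (mul_eq_zero.1 hclosed).resolve_left (by exact_mod_cast hθcos)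

/-- Long's modified Grover iteration with equal phases achieves exact amplitude
amplification: with β = arcsin √(k/2^m), n = ⌈π/(4β) - 1/2⌉ and
φ = 2 arcsin(sin(π/(4n+2))/sin β), after n iterations the state (up to global
phase) has all amplitude on the marked subspace, i.e. its component on the
unmarked basis state vanishes. In the 2-dimensional invariant subspace spanned
by the marked state |g⟩ = (1,0) and the unmarked state |b⟩ = (0,1), the initial
state is ψ = (sin β, cos β) and one iteration is
Q = (I + (e^{iφ}-1)|ψ⟩⟨ψ|)·S_χ(φ), S_χ(φ) = diag(e^{iφ}, 1) (up to global phase). -/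
theorem long_exact_amplitude_amplification (k m : ℕ) (hk : 1 ≤ k) (hkm : k ≤ 2 ^ m) :
    let β : ℝ := Real.arcsin (Real.sqrt ((k : ℝ) / 2 ^ m))
    let n : ℕ := ⌈Real.pi / (4 * β) - 1 / 2⌉₊
    let φ : ℝ := 2 * Real.arcsin (Real.sin (Real.pi / (4 * (n : ℝ) + 2)) / Real.sin β)
    let ψ : Fin 2 → ℂ := ![(Real.sin β : ℂ), (Real.cos β : ℂ)]
    let Sχ : Matrix (Fin 2) (Fin 2) ℂ :=
      Matrix.diagonal ![Complex.exp ((φ : ℂ) * Complex.I), 1]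
    let Q : Matrix (Fin 2) (Fin 2) ℂ :=
      (1 + (Complex.exp ((φ : ℂ) * Complex.I) - 1) • Matrix.vecMulVec ψ ψ) * Sχ
    ((Q ^ n).mulVec ψ) 1 = 0 :=
  long_exact_amplitude_amplification_general k m hk
end

section
/- The quantum exponential searching schedule with growth factor λ strictly between 1 and 4/3, applied to a search space of size S with unknown number t ≥ 1 of marked items, finds a marked item with expected total number of Grover iterations O(√(S/t)). -/
/-- The Grover rotation angle: sin θ = √(t/S). -/
noncomputable def groverTheta (S t : ℕ) : ℝ := Real.arcsin (Real.sqrt ((t : ℝ) / S))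

/-- Success probability of measuring a marked item after j Grover iterations. -/
noncomputable def successProb (S t : ℕ) (j : ℕ) : ℝ :=
  Real.sin ((2 * (j : ℝ) + 1) * groverTheta S t) ^ 2

/-- The cutoff ⌈l_r⌉ in round r of quantum exponential searching:
l_r = min(λ^r, √S) starting from l = 1. -/
noncomputable def roundLen (S : ℕ) (lam : ℝ) (r : ℕ) : ℕ :=
  ⌈min (lam ^ r) (Real.sqrt (S : ℝ))⌉₊

/-- Failure probability of round r (j chosen uniformly in {0,…,⌈l_r⌉-1}). -/
noncomputable def roundFail (S t : ℕ) (lam : ℝ) (r : ℕ) : ℝ :=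
  1 - (∑ j ∈ Finset.range (roundLen S lam r), successProb S t j) / roundLen S lam r

/-- Expected total number of Grover iterations of the exponential searching
schedule: round r is reached with probability ∏_{s<r}(fail s) and consumes on
average (1/⌈l_r⌉)Σ_{j<⌈l_r⌉} j iterations. -/
noncomputable def expectedIterations (S t : ℕ) (lam : ℝ) : ℝ :=
  ∑' r : ℕ, (∏ s ∈ Finset.range r, roundFail S t lam s) *
    ((∑ j ∈ Finset.range (roundLen S lam r), (j : ℝ)) / roundLen S lam r)


/-!
Averaging sin²((2j+1)θ) over j < m gives 1/2 - sin(4mθ)/(4m sin 2θ), which is at least 1/4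
as soon as m sin 2θ ≥ 1, and also whenever π/4 ≤ θ ≤ π/2. Since sin θ = √(t/S), every round r
with λ^r ≥ √(S/t) therefore fails with probability at most 3/4, while round r costs at most λ^r
iterations on average. Up to the first such round r₀ the costs form a geometric series of ratio
λ, after it one of ratio 3λ/4 < 1; both sums are O(λ^r₀) = O(√(S/t)).
-/

open Real Finset

theorem four_mul_sin_two_mul_mul_sum_sin_sq (θ : ℝ) (m : ℕ) :
    4 * sin (2 * θ) * ∑ j ∈ range m, sin ((2 * j + 1) * θ) ^ 2
      = 2 * m * sin (2 * θ) - sin (4 * m * θ) := by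
  induction m with
  | zero => simp
  | succ m ih =>
    have hsq : sin ((2 * m + 1) * θ) ^ 2 = 1 / 2 - cos (2 * (2 * m + 1) * θ) / 2 := by
      rw [sin_sq_eq_half_sub, mul_assoc]
    have hup : sin (4 * (m + 1) * θ) = sin (2 * (2 * m + 1) * θ + 2 * θ) := by ring_nf
    have hdown : sin (4 * m * θ) = sin (2 * (2 * m + 1) * θ - 2 * θ) := by ring_nf
    rw [sin_add] at hup
    rw [sin_sub] at hdown
    rw [sum_range_succ, mul_add, ih]
    push_cast
    rw [hsq]
    linear_combination hup - hdown

theorem neg_sin_two_mul_nat_mul_le {δ : ℝ} (hδ0 : 0 ≤ δ) (hδ : δ ≤ π / 2) (m : ℕ) :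
    -sin (2 * m * δ) ≤ m * sin δ := by
  rcases le_or_gt (2 * m * δ) π with hle | hlt
  · have h2mδ := sin_nonneg_of_nonneg_of_le_pi (by positivity) hle
    have hδ' := sin_nonneg_of_nonneg_of_le_pi hδ0 (by linarith [pi_pos])
    nlinarith [m.cast_nonneg (α := ℝ)]
  · calc -sin (2 * m * δ) ≤ 1 := by linarith [neg_one_le_sin (2 * m * δ)]
      _ ≤ m * (2 / π * δ) := by
        rw [show (m : ℝ) * (2 / π * δ) = 2 * m * δ / π by ring, le_div_iff₀ pi_pos]
        linarith
      _ ≤ m * sin δ := mul_le_mul_of_nonneg_left (mul_le_sin hδ0 hδ) m.cast_nonneg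

theorem sin_four_mul_le_of_pi_div_four_le {θ : ℝ} (h1 : π / 4 ≤ θ) (h2 : θ ≤ π / 2) (m : ℕ) :
    sin (4 * m * θ) ≤ m * sin (2 * θ) := by
  have h := neg_sin_two_mul_nat_mul_le (δ := π - 2 * θ) (by linarith) (by linarith) m
  rwa [sin_pi_sub, ← sin_nat_mul_two_pi_sub,
    show m * (2 * π) - 2 * m * (π - 2 * θ) = 4 * m * θ by ring] at h

theorem quarter_le_sum_sin_sq_of_sin_le {θ : ℝ} {m : ℕ} (hs : 0 < sin (2 * θ))
    (h : sin (4 * m * θ) ≤ m * sin (2 * θ)) :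
    (m : ℝ) / 4 ≤ ∑ j ∈ range m, sin ((2 * j + 1) * θ) ^ 2 := by
  have := four_mul_sin_two_mul_mul_sum_sin_sq θ m
  nlinarith

theorem quarter_le_sum_sin_sq_of_one_le_mul_sin {θ : ℝ} {m : ℕ} (h : 1 ≤ m * sin (2 * θ)) :
    (m : ℝ) / 4 ≤ ∑ j ∈ range m, sin ((2 * j + 1) * θ) ^ 2 :=
  quarter_le_sum_sin_sq_of_sin_le (pos_of_mul_pos_right (one_pos.trans_le h) m.cast_nonneg)
    ((sin_le_one _).trans h)

theorem quarter_le_sum_sin_sq_of_pi_div_four_le {θ : ℝ} (h1 : π / 4 ≤ θ) (h2 : θ ≤ π / 2) (m : ℕ) :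
    (m : ℝ) / 4 ≤ ∑ j ∈ range m, sin ((2 * j + 1) * θ) ^ 2 := by
  rcases h2.lt_or_eq with h2 | rfl
  · exact quarter_le_sum_sin_sq_of_sin_le
      (sin_pos_of_pos_of_lt_pi (by linarith [pi_pos]) (by linarith))
      (sin_four_mul_le_of_pi_div_four_le h1 h2.le m)
  · have hcos (j : ℕ) : cos ((2 * j + 1) * (π / 2)) = 0 :=
      cos_eq_zero_iff.2 ⟨j, by push_cast; ring⟩
    simp [sin_sq, hcos]
    linarith [m.cast_nonneg (α := ℝ)]

theorem sin_le_sin_two_mul {θ : ℝ} (h0 : 0 ≤ θ) (h : θ ≤ π / 3) : sin θ ≤ sin (2 * θ) := by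
  have hcos : 1 / 2 ≤ cos θ :=
    cos_pi_div_three ▸ cos_le_cos_of_nonneg_of_le_pi h0 (by linarith [pi_pos]) h
  have hsin := sin_nonneg_of_nonneg_of_le_pi h0 (by linarith [pi_pos])
  rw [sin_two_mul]
  nlinarith

theorem prod_range_add_le_pow {p : ℕ → ℝ} {q : ℝ} (hp0 : ∀ r, 0 ≤ p r) (hp1 : ∀ r, p r ≤ 1)
    {r₀ : ℕ} (hpq : ∀ r, r₀ ≤ r → p r ≤ q) (n : ℕ) :
    ∏ s ∈ range (r₀ + n), p s ≤ q ^ n := by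
  rw [prod_range_add]
  calc (∏ s ∈ range r₀, p s) * ∏ i ∈ range n, p (r₀ + i)
      ≤ 1 * ∏ _i ∈ range n, q :=
        mul_le_mul (prod_le_one (fun s _ => hp0 s) fun s _ => hp1 s)
          (prod_le_prod (fun i _ => hp0 _) fun i _ => hpq _ (Nat.le_add_right r₀ i))
          (prod_nonneg fun i _ => hp0 _) zero_le_one
    _ = q ^ n := by rw [one_mul, prod_const, card_range]

theorem tsum_prod_mul_le {p a : ℕ → ℝ} {lam q : ℝ} (hp0 : ∀ r, 0 ≤ p r) (hp1 : ∀ r, p r ≤ 1)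
    {r₀ : ℕ} (hpq : ∀ r, r₀ ≤ r → p r ≤ q) (ha0 : ∀ r, 0 ≤ a r) (ha : ∀ r, a r ≤ lam ^ r)
    (hlam : 1 < lam) (hqlam : q * lam < 1) :
    ∑' r, (∏ s ∈ range r, p s) * a r ≤ lam ^ r₀ * (1 / (lam - 1) + 1 / (1 - q * lam)) := by
  set f := fun r => (∏ s ∈ range r, p s) * a r
  have hq : 0 ≤ q := (hp0 r₀).trans (hpq r₀ le_rfl)
  have hf0 (r : ℕ) : 0 ≤ f r := mul_nonneg (prod_nonneg fun s _ => hp0 s) (ha0 r)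
  have hhead (r : ℕ) : f r ≤ lam ^ r :=
    (mul_le_of_le_one_left (ha0 r) (prod_le_one (fun s _ => hp0 s) fun s _ => hp1 s)).trans (ha r)
  have htail (n : ℕ) : f (n + r₀) ≤ lam ^ r₀ * (q * lam) ^ n := by
    calc f (n + r₀) ≤ q ^ n * lam ^ (r₀ + n) := by
          rw [add_comm]
          exact mul_le_mul (prod_range_add_le_pow hp0 hp1 hpq n) (ha _) (ha0 _) (by positivity)
      _ = lam ^ r₀ * (q * lam) ^ n := by ring
  have hgeom : Summable fun n => lam ^ r₀ * (q * lam) ^ n :=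
    (summable_geometric_of_lt_one (by positivity) hqlam).mul_left _
  have hf : Summable f :=
    (summable_nat_add_iff r₀).1 (hgeom.of_nonneg_of_le (fun n => hf0 _) htail)
  calc ∑' r, f r = ∑ r ∈ range r₀, f r + ∑' n, f (n + r₀) := (hf.sum_add_tsum_nat_add r₀).symm
    _ ≤ ∑ r ∈ range r₀, lam ^ r + ∑' n, lam ^ r₀ * (q * lam) ^ n :=
        add_le_add (sum_le_sum fun r _ => hhead r)
          ((hf.comp_injective (add_left_injective r₀)).tsum_le_tsum htail hgeom)
    _ = (lam ^ r₀ - 1) / (lam - 1) + lam ^ r₀ / (1 - q * lam) := by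
        rw [geom_sum_eq hlam.ne', tsum_mul_left, tsum_geometric_of_lt_one (by positivity) hqlam,
          ← div_eq_mul_inv]
    _ ≤ lam ^ r₀ * (1 / (lam - 1) + 1 / (1 - q * lam)) := by
        have : 0 < lam - 1 := sub_pos.2 hlam
        rw [mul_add, mul_one_div, mul_one_div]
        gcongr
        linarith

theorem sum_range_ceil_div_le {x : ℝ} (hx : 0 ≤ x) :
    (∑ j ∈ range ⌈x⌉₊, (j : ℝ)) / ⌈x⌉₊ ≤ x := by
  refine div_le_of_le_mul₀ (Nat.cast_nonneg _) hx ?_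
  calc ∑ j ∈ range ⌈x⌉₊, (j : ℝ) ≤ ∑ _j ∈ range ⌈x⌉₊, x :=
        sum_le_sum fun j hj => (Nat.lt_ceil.1 (mem_range.1 hj)).le
    _ = x * ⌈x⌉₊ := by rw [sum_const, card_range, nsmul_eq_mul, mul_comm]

theorem sin_groverTheta {S t : ℕ} (h : t ≤ S) : sin (groverTheta S t) = √((t : ℝ) / S) :=
  sin_arcsin (neg_one_lt_zero.le.trans (sqrt_nonneg _))
    (sqrt_le_one.2 (div_le_one_of_le₀ (by exact_mod_cast h) (Nat.cast_nonneg S)))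

theorem groverTheta_nonneg (S t : ℕ) : 0 ≤ groverTheta S t :=
  arcsin_nonneg.2 (sqrt_nonneg _)

theorem one_le_sqrt_div {S t : ℕ} (ht : 1 ≤ t) (hts : t ≤ S) : 1 ≤ √((S : ℝ) / t) :=
  one_le_sqrt.2 ((one_le_div (by exact_mod_cast ht)).2 (by exact_mod_cast hts))

theorem sqrt_div_le_roundLen {S t : ℕ} {lam : ℝ} {r : ℕ} (ht : 1 ≤ t)
    (hr : √((S : ℝ) / t) ≤ lam ^ r) : √((S : ℝ) / t) ≤ roundLen S lam r := by
  have hS : √((S : ℝ) / t) ≤ √S :=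
    sqrt_le_sqrt (div_le_self (Nat.cast_nonneg S) (by exact_mod_cast ht))
  exact (le_min hr hS).trans (Nat.le_ceil _)

theorem sum_range_roundLen_div_le_pow (S : ℕ) {lam : ℝ} (hlam : 0 ≤ lam) (r : ℕ) :
    (∑ j ∈ range (roundLen S lam r), (j : ℝ)) / roundLen S lam r ≤ lam ^ r :=
  (sum_range_ceil_div_le (le_min (by positivity) (sqrt_nonneg _))).trans (min_le_left _ _)

theorem roundFail_nonneg (S t : ℕ) (lam : ℝ) (r : ℕ) : 0 ≤ roundFail S t lam r :=
  sub_nonneg.2 <| div_le_one_of_le₀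
    ((sum_le_sum fun _ _ => sin_sq_le_one _).trans (by simp)) (Nat.cast_nonneg _)

theorem roundFail_le_one (S t : ℕ) (lam : ℝ) (r : ℕ) : roundFail S t lam r ≤ 1 :=
  sub_le_self _ <| div_nonneg (sum_nonneg fun _ _ => sq_nonneg _) (Nat.cast_nonneg _)

theorem roundFail_le_three_quarters {S t : ℕ} {lam : ℝ} {r : ℕ} (ht : 1 ≤ t) (hts : t ≤ S)
    (hr : √((S : ℝ) / t) ≤ lam ^ r) : roundFail S t lam r ≤ 3 / 4 := by
  set θ := groverTheta S t
  set m := roundLen S lam r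
  have hm : √((S : ℝ) / t) ≤ m := sqrt_div_le_roundLen ht hr
  have hm0 : (0 : ℝ) < m := one_pos.trans_le ((one_le_sqrt_div ht hts).trans hm)
  have hsum : (m : ℝ) / 4 ≤ ∑ j ∈ range m, successProb S t j := by
    show (m : ℝ) / 4 ≤ ∑ j ∈ range m, sin ((2 * j + 1) * θ) ^ 2
    rcases le_or_gt θ (π / 4) with hθ | hθ
    · refine quarter_le_sum_sin_sq_of_one_le_mul_sin ?_
      have hS : (0 : ℝ) < S := by exact_mod_cast ht.trans hts
      have ht' : (0 : ℝ) < t := by exact_mod_cast ht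
      calc (1 : ℝ) = √((S : ℝ) / t) * sin θ := by
            rw [sin_groverTheta hts, ← sqrt_mul (by positivity), div_mul_div_comm, mul_comm (S : ℝ),
              div_self (by positivity), sqrt_one]
        _ ≤ m * sin (2 * θ) :=
            mul_le_mul hm (sin_le_sin_two_mul (groverTheta_nonneg S t) (by linarith [pi_pos]))
              (sin_nonneg_of_nonneg_of_le_pi (groverTheta_nonneg S t) (by linarith [pi_pos]))
              m.cast_nonneg
    · exact quarter_le_sum_sin_sq_of_pi_div_four_le hθ.le (arcsin_le_pi_div_two _) m
  have havg : 1 / 4 ≤ (∑ j ∈ range m, successProb S t j) / m := by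
    rw [le_div_iff₀ hm0]
    linarith
  rw [roundFail]
  linarith

/-- Quantum exponential searching (BBHM) with growth factor 1 < λ < 4/3 finds a
marked item among S items with t ≥ 1 marked using an expected total number of
Grover iterations in O(√(S/t)). -/
theorem bbhm_expected_iterations (lam : ℝ) (h1 : 1 < lam) (h2 : lam < 4 / 3) :
    ∃ c : ℝ, 0 < c ∧ ∀ S t : ℕ, 1 ≤ t → t ≤ S →
      expectedIterations S t lam ≤ c * Real.sqrt ((S : ℝ) / t) := by
  set K := 1 / (lam - 1) + 1 / (1 - 3 / 4 * lam)
  have hK : 0 < K := add_pos (one_div_pos.2 (by linarith)) (one_div_pos.2 (by linarith))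
  refine ⟨lam * K, by positivity, fun S t ht hts => ?_⟩
  obtain ⟨n, hn_le, hn_lt⟩ := exists_nat_pow_near (one_le_sqrt_div ht hts) h1
  calc expectedIterations S t lam ≤ lam ^ (n + 1) * K :=
        tsum_prod_mul_le (roundFail_nonneg S t lam) (roundFail_le_one S t lam)
          (fun r hr => roundFail_le_three_quarters ht hts
            (hn_lt.le.trans (pow_le_pow_right₀ h1.le hr)))
          (fun r => div_nonneg (sum_nonneg fun j _ => j.cast_nonneg) (Nat.cast_nonneg _))
          (sum_range_roundLen_div_le_pow S (by positivity))
          h1 (by linarith)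
    _ ≤ lam * √((S : ℝ) / t) * K := by
        rw [pow_succ, mul_comm _ lam]
        gcongr
    _ = lam * K * √((S : ℝ) / t) := by ring
end
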